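/- Let a, b, c ∈ ℂ and let G = x·y⁵ + z³ + a·w² + b·w·x³ + c·x⁶ ∈ ℂ[x,y,z,w]. Assume that the only common zero in ℂ⁴ of the four partial derivatives ∂G/∂x, ∂G/∂y, ∂G/∂z, ∂G/∂w is the origin. Then a ≠ 0, 4ac ≠ b², and there exist α, β, γ, δ, ε ∈ ℂ with α·γ·δ·ε ≠ 0 such that G(γx, δy, εz, αw + βx³) = x⁶ + x·y⁵ + z³ + w². -/
import Mathlib


/-!
STATEMENT 10: Let G = x·y⁵ + z³ + a·w² + b·w·x³ + c·x⁶. If the only common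
zero in ℂ⁴ of the four partial derivatives of G is the origin, then a ≠ 0,
4ac ≠ b², and there is a weighted-linear change of coordinates
(x,y,z,w) ↦ (γx, δy, εz, αw + βx³) with αγδε ≠ 0 transforming G into
x⁶ + x·y⁵ + z³ + w².
-/

open MvPolynomial

noncomputable section

/-- The weighted sextic `x·y⁵ + z³ + a·w² + b·w·x³ + c·x⁶`
(variables `x,y,z,w` indexed `0,1,2,3`). -/
def sexticG (a b c : ℂ) : MvPolynomial (Fin 4) ℂ :=
  X 0 * X 1 ^ 5 + X 2 ^ 3 + C a * X 3 ^ 2 + C b * X 3 * X 0 ^ 3 + C c * X 0 ^ 6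

theorem smooth_sextic_normal_form (a b c : ℂ)
    (hsmooth : ∀ v : Fin 4 → ℂ,
      (∀ i : Fin 4, eval v (pderiv i (sexticG a b c)) = 0) → v = 0) :
    a ≠ 0 ∧ 4 * a * c ≠ b ^ 2 ∧
    ∃ α β γ δ ε : ℂ, α * γ * δ * ε ≠ 0 ∧
      aeval ![C γ * X 0, C δ * X 1, C ε * X 2, C α * X 3 + C β * X 0 ^ 3]
          (sexticG a b c) =
        X 0 ^ 6 + X 0 * X 1 ^ 5 + X 2 ^ 3 + X 3 ^ 2 := by
  -- a ≠ 0
  have ha : a ≠ 0 := by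
    intro h0
    subst h0
    have := hsmooth ![0, 0, 0, 1] (by
      intro i
      fin_cases i <;> simp [sexticG])
    have h1 : (![0, 0, 0, 1] : Fin 4 → ℂ) 3 = 0 := by rw [this]; rfl
    simp at h1
  -- 4ac ≠ b²
  have hd : 4 * a * c ≠ b ^ 2 := by
    intro hb
    have := hsmooth ![1, 0, 0, -b / (2 * a)] (by
      intro i
      fin_cases i
      · simp [sexticG]
        field_simp
        linear_combination 3 * hb
      · simp [sexticG]
      · simp [sexticG]
      · simp [sexticG]
        field_simp
        ring)
    have h1 : (![1, 0, 0, -b / (2 * a)] : Fin 4 → ℂ) 0 = 0 := by rw [this]; rfl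
    simp at h1
  refine ⟨ha, hd, ?_⟩
  -- the discriminant-type quantity
  set d : ℂ := (4 * a * c - b ^ 2) / (4 * a) with hd_def
  have hdne : d ≠ 0 := by
    rw [hd_def]
    intro h
    apply hd
    field_simp at h
    linear_combination h
  -- choose the scaling constants
  obtain ⟨α, hα⟩ := Complex.isAlgClosed.exists_pow_nat_eq a⁻¹ (n := 2) (by norm_num)
  obtain ⟨γ, hγ⟩ := Complex.isAlgClosed.exists_pow_nat_eq d⁻¹ (n := 6) (by norm_num)
  have hαne : α ≠ 0 := by
    intro h
    rw [h] at hα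
    have : a⁻¹ = 0 := by simpa using hα.symm
    exact ha (inv_eq_zero.mp this)
  have hγne : γ ≠ 0 := by
    intro h
    rw [h] at hγ
    have : d⁻¹ = 0 := by simpa using hγ.symm
    exact hdne (inv_eq_zero.mp this)
  obtain ⟨δ, hδ⟩ := Complex.isAlgClosed.exists_pow_nat_eq γ⁻¹ (n := 5) (by norm_num)
  have hδne : δ ≠ 0 := by
    intro h
    rw [h] at hδ
    have : γ⁻¹ = 0 := by simpa using hδ.symm
    exact hγne (inv_eq_zero.mp this)
  refine ⟨α, -b * γ ^ 3 / (2 * a), γ, δ, 1, ?_, ?_⟩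
  · simp [hαne, hγne, hδne]
  · -- the key scalar identities
    set β : ℂ := -b * γ ^ 3 / (2 * a) with hβ_def
    have e1 : a * α ^ 2 = 1 := by rw [hα]; field_simp
    have e2 : 2 * a * α * β + b * α * γ ^ 3 = 0 := by
      rw [hβ_def]; field_simp; ring
    have e3 : a * β ^ 2 + b * β * γ ^ 3 + c * γ ^ 6 = 1 := by
      have key : a * β ^ 2 + b * β * γ ^ 3 + c * γ ^ 6 = γ ^ 6 * d := by
        rw [hβ_def, hd_def]
        field_simp
        ring
      rw [key, hγ, inv_mul_cancel₀ hdne]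
    have e4 : γ * δ ^ 5 = 1 := by rw [hδ]; field_simp
    apply MvPolynomial.funext
    intro v
    simp [sexticG]
    linear_combination (v 3) ^ 2 * e1 + v 3 * (v 0) ^ 3 * e2 + (v 0) ^ 6 * e3 +
      v 0 * (v 1) ^ 5 * e4
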